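/- Let f be a measure-preserving transformation on a probability space and A a measurable set with P(A) > 0. Define the first return time ρ_A(ω) = min{n ∈ ℕ : f^n(ω) ∈ A}. Then for an ergodic transformation f, the expected return time conditioned on A satisfies E[ρ_A | A] = 1/P(A) (Kac's lemma). -/

import Mathlib

/-!
Let `E n` be the set of points whose orbit avoids `A` at the times `1, …, n`. Since
`E (n + 1) = f⁻¹' (E n \ A)` and `f` preserves `μ`, we get `μ (E n ∩ A) = μ (E n) - μ (E (n + 1))`,
so `∑ n, μ (E n ∩ A)` telescopes to `μ univ - μ (⋂ n, E n)`, and `⋂ n, E n` is the preimage of the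
set of points whose orbit never meets `A`. By Poincaré recurrence `E n ∩ A` agrees a.e. with
`{n < ρ_A} ∩ A`, so `∫_A ρ_A = ∑ n, μ ({n < ρ_A} ∩ A)` is the measure of the set of points whose
orbit meets `A`, which ergodicity forces to be everything.
-/

open MeasureTheory Set Filter
open scoped ENNReal

section Layercake

variable {α : Type*} [MeasurableSpace α] {μ : Measure α}

theorem tsum_ite_lt_eq_natCast (k : ℕ) : ∑' n : ℕ, (if n < k then (1 : ℝ≥0∞) else 0) = k := by
  rw [tsum_eq_sum (s := Finset.range k) fun n hn => by simpa using hn]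
  simp [Finset.sum_ite_of_true (fun n hn => Finset.mem_range.1 hn)]

theorem lintegral_natCast_eq_tsum_measure_lt {g : α → ℕ} (hg : Measurable g) :
    ∫⁻ x, (g x : ℝ≥0∞) ∂μ = ∑' n, μ {x | n < g x} := by
  have hmeas (n : ℕ) : MeasurableSet {x | n < g x} := measurableSet_lt measurable_const hg
  calc ∫⁻ x, (g x : ℝ≥0∞) ∂μ = ∫⁻ x, ∑' n, {x | n < g x}.indicator 1 x ∂μ := by
        simp only [indicator_apply, mem_ofPred_eq, Pi.one_apply, tsum_ite_lt_eq_natCast]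
    _ = ∑' n, μ {x | n < g x} := by
        rw [lintegral_tsum fun n => (measurable_one.indicator (hmeas n)).aemeasurable]
        simp only [lintegral_indicator_one (hmeas _)]

theorem tsum_add_measure_iInter_eq {s : ℕ → Set α} (hs : ∀ n, NullMeasurableSet (s n) μ)
    (hanti : Antitone s) (h0 : μ (s 0) ≠ ∞) {a : ℕ → ℝ≥0∞}
    (ha : ∀ n, a n + μ (s (n + 1)) = μ (s n)) :
    ∑' n, a n + μ (⋂ n, s n) = μ (s 0) := by
  have hpartial (m : ℕ) : ∑ n ∈ Finset.range m, a n + μ (s m) = μ (s 0) := by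
    induction m with
    | zero => simp
    | succ m ih => rw [Finset.sum_range_succ, add_assoc, ha, ih]
  have hlim := (ENNReal.tendsto_nat_tsum a).add (tendsto_measure_iInter_atTop hs hanti ⟨0, h0⟩)
  simp only [Function.comp_apply, hpartial] at hlim
  exact (tendsto_const_nhds_iff.1 hlim).symm

end Layercake

section ReturnTime

variable {Ω : Type*} {f : Ω → Ω} {A : Set Ω}

/-- Equal to `0` (`sInf ∅`) when the orbit of `ω` never returns to `A`. -/
noncomputable def firstReturnTime (f : Ω → Ω) (A : Set Ω) (ω : Ω) : ℕ :=
  sInf {n | 1 ≤ n ∧ f^[n] ω ∈ A}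

def notReturnedBy (f : Ω → Ω) (A : Set Ω) (n : ℕ) : Set Ω :=
  {ω | ∀ k ∈ Icc 1 n, f^[k] ω ∉ A}

theorem notReturnedBy_zero : notReturnedBy f A 0 = univ := by
  ext ω
  simp [notReturnedBy]

theorem notReturnedBy_antitone : Antitone (notReturnedBy f A) :=
  fun _ _ hnm _ hω k hk => hω k ⟨hk.1, hk.2.trans hnm⟩

theorem notReturnedBy_succ (n : ℕ) :
    notReturnedBy f A (n + 1) = f ⁻¹' (notReturnedBy f A n \ A) := by
  ext ω
  simp only [notReturnedBy, mem_preimage, Set.mem_sdiff, mem_ofPred_eq, mem_Icc]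
  constructor
  · intro h
    refine ⟨fun k hk => ?_, by simpa using h 1 ⟨le_rfl, by omega⟩⟩
    rw [← Function.iterate_succ_apply]
    exact h (k + 1) ⟨by omega, by omega⟩
  · rintro ⟨h, h1⟩ k ⟨hk1, hkn⟩
    obtain ⟨j, rfl⟩ : ∃ j, k = j + 1 := ⟨k - 1, by omega⟩
    rw [Function.iterate_succ_apply]
    rcases j.eq_zero_or_pos with rfl | hj
    · simpa using h1
    · exact h j ⟨hj, by omega⟩

theorem iInter_notReturnedBy :
    ⋂ n, notReturnedBy f A n = f ⁻¹' {ω | ∃ k, f^[k] ω ∈ A}ᶜ := by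
  ext ω
  simp only [notReturnedBy, mem_iInter, mem_ofPred_eq, mem_Icc, mem_preimage, mem_compl_iff,
    not_exists, ← Function.iterate_succ_apply]
  exact ⟨fun h k => h (k + 1) (k + 1) ⟨by omega, le_rfl⟩,
    fun h n k hk => by simpa [Nat.sub_add_cancel hk.1] using h (k - 1)⟩

theorem lt_firstReturnTime_iff {n : ℕ} {ω : Ω} :
    n < firstReturnTime f A ω ↔ ω ∈ notReturnedBy f A n ∧ ∃ k, 1 ≤ k ∧ f^[k] ω ∈ A := by
  constructor
  · intro h
    have hne : {k | 1 ≤ k ∧ f^[k] ω ∈ A}.Nonempty := by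
      by_contra hempty
      rw [not_nonempty_iff_eq_empty] at hempty
      simp [firstReturnTime, hempty] at h
    refine ⟨fun k hk hkA => ?_, hne⟩
    have : firstReturnTime f A ω ≤ k := Nat.sInf_le ⟨hk.1, hkA⟩
    exact absurd hk.2 (by omega)
  · rintro ⟨hω, hne⟩
    have hmem := Nat.sInf_mem hne
    by_contra! hle
    exact hω _ ⟨hmem.1, hle⟩ hmem.2

variable [MeasurableSpace Ω]

theorem measurableSet_notReturnedBy (hf : Measurable f) (hA : MeasurableSet A) (n : ℕ) :
    MeasurableSet (notReturnedBy f A n) := by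
  simp only [notReturnedBy, ofPred_forall]
  exact .biInter (to_countable _) fun k _ => (hf.iterate k) hA.compl

theorem measurableSet_ofPred_exists_iterate_mem (hf : Measurable f) (hA : MeasurableSet A) :
    MeasurableSet {ω | ∃ k, f^[k] ω ∈ A} := by
  simp only [ofPred_exists]
  exact .iUnion fun k => (hf.iterate k) hA

theorem measurable_firstReturnTime (hf : Measurable f) (hA : MeasurableSet A) :
    Measurable (firstReturnTime f A) := by
  refine measurable_of_Ioi fun n => ?_
  have hreturn : MeasurableSet {ω | ∃ k, 1 ≤ k ∧ f^[k] ω ∈ A} := by measurability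
  have : firstReturnTime f A ⁻¹' Ioi n =
      notReturnedBy f A n ∩ {ω | ∃ k, 1 ≤ k ∧ f^[k] ω ∈ A} := by
    ext ω
    exact lt_firstReturnTime_iff
  rw [this]
  exact (measurableSet_notReturnedBy hf hA n).inter hreturn

end ReturnTime

namespace MeasureTheory.MeasurePreserving

variable {Ω : Type*} [MeasurableSpace Ω] {μ : Measure Ω} [IsFiniteMeasure μ] {f : Ω → Ω}
  {A : Set Ω}

theorem ae_mem_imp_exists_iterate_mem (hf : MeasurePreserving f μ μ)
    (hA : MeasurableSet A) : ∀ᵐ ω ∂μ, ω ∈ A → ∃ k, 1 ≤ k ∧ f^[k] ω ∈ A := by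
  filter_upwards [hf.conservative.ae_mem_imp_frequently_image_mem hA.nullMeasurableSet]
    with ω hfreq hω
  exact (hfreq hω).forall_exists_of_atTop 1

theorem measure_lt_firstReturnTime_inter (hf : MeasurePreserving f μ μ)
    (hA : MeasurableSet A) (n : ℕ) :
    μ ({ω | n < firstReturnTime f A ω} ∩ A) = μ (notReturnedBy f A n ∩ A) := by
  refine measure_congr (eventuallyEq_set.2 ?_)
  filter_upwards [hf.ae_mem_imp_exists_iterate_mem hA] with ω hω
  simp only [mem_inter_iff, mem_ofPred_eq, lt_firstReturnTime_iff]
  tauto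

theorem tsum_measure_notReturnedBy_inter (hf : MeasurePreserving f μ μ)
    (hA : MeasurableSet A) :
    ∑' n, μ (notReturnedBy f A n ∩ A) = μ {ω | ∃ k, f^[k] ω ∈ A} := by
  have hE := measurableSet_notReturnedBy hf.measurable hA
  have hU := measurableSet_ofPred_exists_iterate_mem hf.measurable hA
  have key := tsum_add_measure_iInter_eq (fun n => (hE n).nullMeasurableSet)
    notReturnedBy_antitone (measure_ne_top μ _) fun n => by
      rw [notReturnedBy_succ, hf.measure_preimage ((hE n).diff hA).nullMeasurableSet,
        measure_inter_add_sdiff _ hA]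
  rw [iInter_notReturnedBy, hf.measure_preimage hU.compl.nullMeasurableSet, notReturnedBy_zero,
    ← measure_add_measure_compl hU] at key
  exact (ENNReal.add_left_inj (measure_ne_top μ _)).1 key

theorem setLIntegral_firstReturnTime (hf : MeasurePreserving f μ μ)
    (hA : MeasurableSet A) :
    ∫⁻ ω in A, (firstReturnTime f A ω : ℝ≥0∞) ∂μ = μ {ω | ∃ k, f^[k] ω ∈ A} := by
  have hρ := measurable_firstReturnTime hf.measurable hA
  rw [lintegral_natCast_eq_tsum_measure_lt hρ, ← hf.tsum_measure_notReturnedBy_inter hA]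
  refine tsum_congr fun n => ?_
  rw [Measure.restrict_apply (measurableSet_lt measurable_const hρ),
    hf.measure_lt_firstReturnTime_inter hA]

end MeasureTheory.MeasurePreserving

theorem Ergodic.measure_ofPred_exists_iterate_mem {Ω : Type*} [MeasurableSpace Ω] {μ : Measure Ω}
    [IsFiniteMeasure μ] {f : Ω → Ω} {A : Set Ω} (hf : Ergodic f μ) (hA : MeasurableSet A)
    (hA0 : μ A ≠ 0) : μ {ω | ∃ k, f^[k] ω ∈ A} = μ univ := by
  have hU := measurableSet_ofPred_exists_iterate_mem hf.measurable hA
  have hinv : f ⁻¹' {ω | ∃ k, f^[k] ω ∈ A} ⊆ {ω | ∃ k, f^[k] ω ∈ A} :=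
    fun _ ⟨k, hk⟩ => ⟨k + 1, hk⟩
  rcases hf.ae_empty_or_univ_of_preimage_ae_le hU.nullMeasurableSet hinv.eventuallyLE with h | h
  · have hAU : A ⊆ {ω | ∃ k, f^[k] ω ∈ A} := fun ω hω => ⟨0, hω⟩
    exact absurd (measure_mono_null hAU (ae_eq_empty.1 h)) hA0
  · exact measure_congr h

/-- Kac's lemma: for an ergodic measure-preserving map `f` on a probability space
and a measurable set `A` with positive measure, the expected first return time
conditioned on `A` equals `1 / P(A)`. -/
theorem kac_lemma {Ω : Type*} [MeasurableSpace Ω] (μ : Measure Ω) [IsProbabilityMeasure μ]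
    (f : Ω → Ω) (hf : Ergodic f μ) (A : Set Ω) (hA : MeasurableSet A) (hApos : 0 < μ A)
    (ρ : Ω → ℕ) (hρ : ∀ ω, ρ ω = sInf {n : ℕ | 1 ≤ n ∧ f^[n] ω ∈ A}) :
    (∫ ω in A, (ρ ω : ℝ) ∂μ) / (μ A).toReal = 1 / (μ A).toReal := by
  obtain rfl : ρ = firstReturnTime f A := funext hρ
  have hρ_meas := measurable_firstReturnTime hf.measurable hA
  have hlint : ∫⁻ ω in A, (firstReturnTime f A ω : ℝ≥0∞) ∂μ = 1 := by
    rw [hf.toMeasurePreserving.setLIntegral_firstReturnTime hA,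
      hf.measure_ofPred_exists_iterate_mem hA hApos.ne', measure_univ]
  have hint : ∫ ω in A, (firstReturnTime f A ω : ℝ) ∂μ = 1 := by
    simpa [hlint] using integral_toReal (μ := μ.restrict A)
      (measurable_from_nat.comp hρ_meas).aemeasurable
      (ae_of_all _ fun ω => ENNReal.natCast_lt_top (firstReturnTime f A ω))
  rw [hint]
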